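/- arXiv:1706.03591 — 2 statements merged into one kernel-verified Lean document; each statement's English description precedes it below -/
import Mathlib

section
/- Let n ≥ k and d ≥ k, and let R' = Φᵀ R ∈ ℝ^{k×d} have a singular value decomposition R' = Q_L Σ Q_Rᵀ, where Q_L ∈ ℝ^{k×k} and Q_R ∈ ℝ^{d×d} are orthogonal and Σ ∈ ℝ^{k×d} is the rectangular diagonal matrix whose diagonal entries are the singular values σ₁,…,σ_k of R'. Then there exists an orthogonal matrix Q ∈ ℝ^{d×d} such that ‖Ψ − Φ I_{k×d} Q‖_F = ‖Σ − I_{k×d}‖_F, i.e. ‖Ψ − Φ I_{k×d} Q‖_F² = Σ_{i=1}^{k} (σ_i − 1)². -/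
open Matrix MeasureTheory ProbabilityTheory Finset

noncomputable section

/-- The `a × b` matrix with ones on the main diagonal and zeros elsewhere. -/
def rectId (a b : ℕ) : Matrix (Fin a) (Fin b) ℝ :=
  Matrix.of fun i j => if (i : ℕ) = (j : ℕ) then 1 else 0

/-- Frobenius norm of a real matrix. -/
def frob {a b : ℕ} (M : Matrix (Fin a) (Fin b) ℝ) : ℝ :=
  Real.sqrt (∑ i, ∑ j, (M i j) ^ 2)

/-- Euclidean norm of a vector. -/
def enorm2 {a : ℕ} (v : Fin a → ℝ) : ℝ :=
  Real.sqrt (∑ i, (v i) ^ 2)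

/-- `X` is the cluster-indicator matrix of the partition of `Fin n` into the
(nonempty) fibers of the surjective map `f : Fin n → Fin k`. -/
def IsIndicatorOf {n k : ℕ} (f : Fin n → Fin k) (X : Matrix (Fin n) (Fin k) ℝ) : Prop :=
  Function.Surjective f ∧
    ∀ i j, X i j =
      if f i = j then 1 / Real.sqrt ((Finset.univ.filter fun i' => f i' = j).card) else 0

/-- `X` is a cluster-indicator matrix of a partition into `k` nonempty clusters. -/
def IsIndicator {n k : ℕ} (X : Matrix (Fin n) (Fin k) ℝ) : Prop :=
  ∃ f : Fin n → Fin k, IsIndicatorOf f X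

/-- The k-means cost of the assignment `X` on the feature matrix `M`. -/
def kmeansCost {n k m : ℕ} (M : Matrix (Fin n) (Fin m) ℝ)
    (X : Matrix (Fin n) (Fin k) ℝ) : ℝ :=
  frob (M - X * Xᵀ * M)

/-- `X` minimizes the k-means cost on features `M` over all indicator matrices. -/
def IsOptAssign {n k m : ℕ} (M : Matrix (Fin n) (Fin m) ℝ)
    (X : Matrix (Fin n) (Fin k) ℝ) : Prop :=
  IsIndicator X ∧
    ∀ Y : Matrix (Fin n) (Fin k) ℝ, IsIndicator Y → kmeansCost M X ≤ kmeansCost M Y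

/-- Law of an `n × d` random matrix with i.i.d. Gaussian entries of
mean `0` and variance `1 / d`. -/
def gaussMeasure (n d : ℕ) : Measure (Fin n → Fin d → ℝ) :=
  Measure.pi fun _ => Measure.pi fun _ => gaussianReal 0 (d : NNReal)⁻¹

/-!
Write `J = I_{k×d}`. Since `Φᵀ Φ = 1`, the SVD gives `Ψ = Φ Φᵀ R = (Φ Q_L) Σ Q_Rᵀ`.
The orthogonal `d × d` matrix `Q̃ = Jᵀ Q_L J + (1 - Jᵀ J)`, which acts as `Q_L` on the first `k`
coordinates and as the identity on the others, satisfies `J Q̃ = Q_L J`. For `Q = Q̃ Q_Rᵀ` this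
gives `Ψ - Φ J Q = (Φ Q_L) (Σ - J) Q_Rᵀ`, and the Frobenius norm is invariant under left
multiplication by `Φ Q_L` (orthonormal columns) and right multiplication by the orthogonal `Q_Rᵀ`.
-/

section ExtendOrthogonal

variable {ι κ R : Type*} [Fintype ι] [Fintype κ] [DecidableEq ι] [CommRing R]

def extendAlong (J : Matrix κ ι R) (O : Matrix κ κ R) : Matrix ι ι R :=
  Jᵀ * O * J + (1 - Jᵀ * J)

variable [DecidableEq κ] {J : Matrix κ ι R} (O : Matrix κ κ R)

theorem mul_extendAlong (hJ : J * Jᵀ = 1) : J * extendAlong J O = O * J := by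
  rw [extendAlong, Matrix.mul_add, Matrix.mul_sub, ← Matrix.mul_assoc, ← Matrix.mul_assoc,
    ← Matrix.mul_assoc, hJ, Matrix.one_mul, Matrix.mul_one, Matrix.one_mul, sub_self, add_zero]

theorem one_sub_mul_extendAlong (hJ : J * Jᵀ = 1) :
    (1 - Jᵀ * J) * extendAlong J O = 1 - Jᵀ * J := by
  have hkill : (1 - Jᵀ * J) * Jᵀ = 0 := by
    rw [Matrix.sub_mul, Matrix.one_mul, Matrix.mul_assoc, hJ, Matrix.mul_one, sub_self]
  rw [extendAlong, Matrix.mul_add, ← Matrix.mul_assoc, ← Matrix.mul_assoc, hkill,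
    Matrix.zero_mul, Matrix.zero_mul, zero_add, Matrix.mul_sub, Matrix.mul_one,
    ← Matrix.mul_assoc, hkill, Matrix.zero_mul, sub_zero]

theorem extendAlong_transpose_mul_self (hJ : J * Jᵀ = 1) (hO : Oᵀ * O = 1) :
    (extendAlong J O)ᵀ * extendAlong J O = 1 := by
  have htr : (extendAlong J O)ᵀ = extendAlong J Oᵀ := by
    simp only [extendAlong, Matrix.transpose_add, Matrix.transpose_sub, Matrix.transpose_mul,
      Matrix.transpose_one, Matrix.transpose_transpose, Matrix.mul_assoc]
  rw [htr]
  calc extendAlong J Oᵀ * extendAlong J O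
      = Jᵀ * Oᵀ * (J * extendAlong J O) + (1 - Jᵀ * J) * extendAlong J O := by
        rw [extendAlong, Matrix.add_mul, Matrix.mul_assoc (Jᵀ * Oᵀ)]
    _ = 1 := by
        rw [mul_extendAlong O hJ, one_sub_mul_extendAlong O hJ, Matrix.mul_assoc,
          ← Matrix.mul_assoc Oᵀ, hO, Matrix.one_mul, add_sub_cancel]

end ExtendOrthogonal

theorem rectId_transpose (a b : ℕ) : (rectId a b)ᵀ = rectId b a := by
  ext i j; simp [rectId, eq_comm]

theorem sum_ite_val_eq_sq {a b : ℕ} (h : a ≤ b) (i : Fin a) (x : ℝ) :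
    ∑ j : Fin b, (if (i : ℕ) = (j : ℕ) then x else 0) ^ 2 = x ^ 2 := by
  rw [Finset.sum_eq_single (Fin.castLE h i)]
  · simp
  · intro j _ hj
    rw [if_neg fun hij => hj (Fin.ext hij.symm), zero_pow two_ne_zero]
  · simp

theorem rectId_mul_rectId {a b : ℕ} (h : a ≤ b) : rectId a b * rectId b a = 1 := by
  ext i j
  rw [Matrix.mul_apply, Finset.sum_eq_single (Fin.castLE h i)]
  · simp [rectId, Matrix.one_apply, Fin.ext_iff]
  · intro l _ hl
    have hil : (i : ℕ) ≠ l := fun hil => hl (Fin.ext hil.symm)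
    simp [rectId, hil]
  · simp

theorem frob_eq_sqrt_trace {a b : ℕ} (M : Matrix (Fin a) (Fin b) ℝ) :
    frob M = √(Mᵀ * M).trace := by
  rw [frob, Finset.sum_comm]
  simp [Matrix.trace, Matrix.mul_apply, sq]

theorem frob_sq {a b : ℕ} (M : Matrix (Fin a) (Fin b) ℝ) :
    frob M ^ 2 = ∑ i, ∑ j, M i j ^ 2 :=
  Real.sq_sqrt (by positivity)

theorem frob_mul_of_transpose_mul_self {a b c : ℕ} {A : Matrix (Fin a) (Fin b) ℝ}
    (hA : Aᵀ * A = 1) (M : Matrix (Fin b) (Fin c) ℝ) : frob (A * M) = frob M := by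
  rw [frob_eq_sqrt_trace, frob_eq_sqrt_trace, Matrix.transpose_mul, Matrix.mul_assoc,
    ← Matrix.mul_assoc Aᵀ, hA, Matrix.one_mul]

theorem frob_mul_of_mul_transpose_self {a b c : ℕ} {B : Matrix (Fin b) (Fin c) ℝ}
    (hB : B * Bᵀ = 1) (M : Matrix (Fin a) (Fin b) ℝ) : frob (M * B) = frob M := by
  rw [frob_eq_sqrt_trace, frob_eq_sqrt_trace, Matrix.transpose_mul, Matrix.mul_assoc,
    Matrix.trace_mul_comm, Matrix.mul_assoc, Matrix.mul_assoc M, hB, Matrix.mul_one]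

theorem frob_sq_diagonal_sub_rectId {a b : ℕ} (h : a ≤ b) (s : Fin a → ℝ) :
    frob (Matrix.of (fun (i : Fin a) (j : Fin b) => if (i : ℕ) = (j : ℕ) then s i else 0)
      - rectId a b) ^ 2 = ∑ i, (s i - 1) ^ 2 := by
  rw [frob_sq]
  refine Finset.sum_congr rfl fun i _ => ?_
  rw [← sum_ite_val_eq_sq h i]
  refine Finset.sum_congr rfl fun j _ => ?_
  by_cases hij : (i : ℕ) = (j : ℕ) <;> simp [rectId, hij]

/-- there is an orthogonal `Q` with
`‖Ψ − Φ I_{k×d} Q‖_F = ‖Σ − I_{k×d}‖_F`, i.e. the squared error is `∑ (σᵢ − 1)²`. -/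
theorem statement1 {n k d : ℕ} (hnk : k ≤ n) (hkd : k ≤ d)
    (U : Matrix (Fin n) (Fin n) ℝ) (hU : Uᵀ * U = 1)
    (R : Matrix (Fin n) (Fin d) ℝ)
    (Φ : Matrix (Fin n) (Fin k) ℝ) (hΦ : Φ = U * rectId n k)
    (Ψ : Matrix (Fin n) (Fin d) ℝ) (hΨ : Ψ = Φ * Φᵀ * R)
    (sv : Fin k → ℝ)
    (Sig : Matrix (Fin k) (Fin d) ℝ)
    (hSig : Sig = Matrix.of fun (i : Fin k) (j : Fin d) => if (i : ℕ) = (j : ℕ) then sv i else 0)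
    (QL : Matrix (Fin k) (Fin k) ℝ) (hQL : QLᵀ * QL = 1)
    (QR : Matrix (Fin d) (Fin d) ℝ) (hQR : QRᵀ * QR = 1)
    (hSVD : Φᵀ * R = QL * Sig * QRᵀ) :
    ∃ Q : Matrix (Fin d) (Fin d) ℝ, Qᵀ * Q = 1 ∧
      frob (Ψ - Φ * rectId k d * Q) = frob (Sig - rectId k d) ∧
      frob (Ψ - Φ * rectId k d * Q) ^ 2 = ∑ i : Fin k, (sv i - 1) ^ 2 := by
  have hJ : rectId k d * (rectId k d)ᵀ = 1 := by rw [rectId_transpose, rectId_mul_rectId hkd]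
  have hQR' : QR * QRᵀ = 1 := mul_eq_one_comm.mp hQR
  have hΦΦ : Φᵀ * Φ = 1 := by
    rw [hΦ, Matrix.transpose_mul, rectId_transpose, Matrix.mul_assoc, ← Matrix.mul_assoc Uᵀ,
      hU, Matrix.one_mul, rectId_mul_rectId hnk]
  have hΦQL : (Φ * QL)ᵀ * (Φ * QL) = 1 := by
    rw [Matrix.transpose_mul, Matrix.mul_assoc, ← Matrix.mul_assoc Φᵀ, hΦΦ, Matrix.one_mul,
      hQL]
  set Qext := extendAlong (rectId k d) QL
  have hresidual :
      Ψ - Φ * rectId k d * (Qext * QRᵀ) = Φ * QL * (Sig - rectId k d) * QRᵀ := by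
    rw [hΨ, Matrix.mul_assoc Φ, hSVD, Matrix.mul_assoc Φ (rectId k d),
      ← Matrix.mul_assoc (rectId k d), mul_extendAlong QL hJ]
    simp only [Matrix.mul_sub, Matrix.sub_mul, Matrix.mul_assoc]
  have hfrob : frob (Ψ - Φ * rectId k d * (Qext * QRᵀ)) = frob (Sig - rectId k d) := by
    rw [hresidual, frob_mul_of_mul_transpose_self (by rwa [Matrix.transpose_transpose]),
      frob_mul_of_transpose_mul_self hΦQL]
  refine ⟨Qext * QRᵀ, ?_, hfrob, ?_⟩
  · rw [Matrix.transpose_mul, Matrix.transpose_transpose, Matrix.mul_assoc,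
      ← Matrix.mul_assoc Qextᵀ, extendAlong_transpose_mul_self QL hJ hQL, Matrix.one_mul, hQR']
  · rw [hfrob, hSig, frob_sq_diagonal_sub_rectId hkd]
end
end

section
/- Let n ≥ k, d ≥ k and t ≥ 0. If every singular value σ_i of R' = Φᵀ R ∈ ℝ^{k×d} satisfies |σ_i − 1| ≤ (√k + t)/√d, then the SC cost C_Φ and the CSC cost C_Ψ satisfy C_Φ ≤ C_Ψ ≤ C_Φ + 2·√(k/d)·(√k + t). -/
open Matrix MeasureTheory ProbabilityTheory Finset

noncomputable section

/-! Write `A_X = Φ - X Xᵀ Φ`; since `Ψ = Φ R'` with `R' = Φᵀ R`, the residual of `X` on `Ψ` is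
`A_X R'`. Comparing `tr (A_X R' R'ᵀ A_Xᵀ)` with the extreme eigenvalues of `R' R'ᵀ` gives
`(1 - ε) ‖A_X‖ ≤ ‖A_X R'‖ ≤ (1 + ε) ‖A_X‖` when the singular values of `R'` lie in `[1 - ε, 1 + ε]`.
Optimality of `X*_Ψ` on `Ψ` then yields `(1 - ε) C_Ψ ≤ (1 + ε) C_Φ`, and as both costs are at
most `‖Φ‖_F ≤ √k`, `C_Ψ - C_Φ ≤ ε (C_Φ + C_Ψ) ≤ 2 ε √k`. -/

namespace Matrix

variable {m n : Type*} [Fintype m] [Fintype n] [DecidableEq n]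

lemma trace_mul_algebraMap_mul (A : Matrix m n ℝ) (c : ℝ) :
    (A * algebraMap ℝ (Matrix n n ℝ) c * Aᵀ).trace = c * (A * Aᵀ).trace := by
  rw [Algebra.algebraMap_eq_smul_one, Matrix.mul_smul, Matrix.mul_one, Matrix.smul_mul,
    trace_smul, smul_eq_mul]

namespace IsHermitian

variable {S : Matrix n n ℝ}

lemma posSemidef_sub_algebraMap (hS : S.IsHermitian) {c : ℝ}
    (hc : ∀ i, c ≤ hS.eigenvalues i) : (S - algebraMap ℝ (Matrix n n ℝ) c).PosSemidef := by
  refine posSemidef_iff_isHermitian_and_spectrum_nonneg.mpr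
    ⟨hS.sub (isHermitian_diagonal _), ?_⟩
  rw [← spectrum.sub_singleton_eq, hS.spectrum_real_eq_range_eigenvalues]
  rintro _ ⟨_, ⟨i, rfl⟩, _, rfl, rfl⟩
  exact sub_nonneg.mpr (hc i)

lemma posSemidef_algebraMap_sub (hS : S.IsHermitian) {c : ℝ}
    (hc : ∀ i, hS.eigenvalues i ≤ c) : (algebraMap ℝ (Matrix n n ℝ) c - S).PosSemidef := by
  refine posSemidef_iff_isHermitian_and_spectrum_nonneg.mpr
    ⟨(isHermitian_diagonal _).sub hS, ?_⟩
  rw [← spectrum.singleton_sub_eq, hS.spectrum_real_eq_range_eigenvalues]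
  rintro _ ⟨_, rfl, _, ⟨i, rfl⟩, rfl⟩
  exact sub_nonneg.mpr (hc i)

lemma mul_trace_le_trace_mul_mul (hS : S.IsHermitian) {c : ℝ}
    (hc : ∀ i, c ≤ hS.eigenvalues i) (A : Matrix m n ℝ) :
    c * (A * Aᵀ).trace ≤ (A * S * Aᵀ).trace := by
  have := ((hS.posSemidef_sub_algebraMap hc).mul_mul_conjTranspose_same A).trace_nonneg
  rw [conjTranspose_eq_transpose_of_trivial, Matrix.mul_sub, Matrix.sub_mul, trace_sub,
    trace_mul_algebraMap_mul] at this
  linarith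

lemma trace_mul_mul_le_mul_trace (hS : S.IsHermitian) {c : ℝ}
    (hc : ∀ i, hS.eigenvalues i ≤ c) (A : Matrix m n ℝ) :
    (A * S * Aᵀ).trace ≤ c * (A * Aᵀ).trace := by
  have := ((hS.posSemidef_algebraMap_sub hc).mul_mul_conjTranspose_same A).trace_nonneg
  rw [conjTranspose_eq_transpose_of_trivial, Matrix.mul_sub, Matrix.sub_mul, trace_sub,
    trace_mul_algebraMap_mul] at this
  linarith

end IsHermitian

end Matrix

section Frobenius

variable {a b c : ℕ}

lemma frob_nonneg (M : Matrix (Fin a) (Fin b) ℝ) : 0 ≤ frob M :=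
  Real.sqrt_nonneg _

lemma frob_eq_sqrt_trace_mul_transpose (M : Matrix (Fin a) (Fin b) ℝ) :
    frob M = √(M * Mᵀ).trace := by
  simp only [frob, trace, Matrix.diag, mul_apply, transpose_apply, sq]

lemma frob_eq_sqrt_trace_transpose_mul (M : Matrix (Fin a) (Fin b) ℝ) :
    frob M = √(Mᵀ * M).trace := by
  rw [frob_eq_sqrt_trace_mul_transpose, trace_mul_comm]

lemma frob_mul_eq_sqrt_trace (A : Matrix (Fin a) (Fin b) ℝ) (B : Matrix (Fin b) (Fin c) ℝ) :
    frob (A * B) = √(A * (B * Bᵀ) * Aᵀ).trace := by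
  rw [frob_eq_sqrt_trace_mul_transpose, transpose_mul, Matrix.mul_assoc, Matrix.mul_assoc,
    Matrix.mul_assoc]

lemma frob_mul_of_transpose_mul_self_eq_one {U : Matrix (Fin c) (Fin a) ℝ} (hU : Uᵀ * U = 1)
    (M : Matrix (Fin a) (Fin b) ℝ) : frob (U * M) = frob M := by
  rw [frob_eq_sqrt_trace_transpose_mul, frob_eq_sqrt_trace_transpose_mul, transpose_mul,
    Matrix.mul_assoc, ← Matrix.mul_assoc Uᵀ, hU, Matrix.one_mul]

lemma frob_rectId_le (a b : ℕ) : frob (rectId a b) ≤ √b := by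
  rw [frob, Finset.sum_comm]
  refine Real.sqrt_le_sqrt ?_
  calc ∑ j : Fin b, ∑ i : Fin a, rectId a b i j ^ 2 ≤ ∑ _j : Fin b, (1 : ℝ) := by
        refine Finset.sum_le_sum fun j _ => ?_
        simp only [rectId, of_apply, ite_pow, one_pow, ne_eq, OfNat.ofNat_ne_zero,
          not_false_eq_true, zero_pow]
        rw [Fin.sum_univ_eq_sum_range (fun i => if i = (j : ℕ) then (1 : ℝ) else 0),
          Finset.sum_ite_eq']
        split_ifs <;> norm_num
    _ = b := by simp

end Frobenius

section KMeans

variable {n k m p : ℕ}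

lemma IsIndicatorOf.transpose_mul_self {f : Fin n → Fin k} {X : Matrix (Fin n) (Fin k) ℝ}
    (h : IsIndicatorOf f X) : Xᵀ * X = 1 := by
  obtain ⟨hsurj, hX⟩ := h
  ext j j'
  simp only [mul_apply, transpose_apply, hX, one_apply, ite_mul, mul_ite, zero_mul, mul_zero]
  split_ifs with hjj
  · subst hjj
    set s := (Finset.univ.filter fun i' => f i' = j).card
    have hs : (0 : ℝ) < s := by
      obtain ⟨i, hi⟩ := hsurj j
      exact_mod_cast Finset.card_pos.mpr ⟨i, by simp [hi]⟩
    simp only [← ite_and, and_self]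
    rw [← Finset.sum_filter, Finset.sum_const, nsmul_eq_mul, one_div, ← mul_inv,
      Real.mul_self_sqrt hs.le]
    exact mul_inv_cancel₀ hs.ne'
  · refine Finset.sum_eq_zero fun i _ => ?_
    split_ifs with h1 h2 <;> first | rfl | exact absurd (h2.symm.trans h1) hjj

lemma IsIndicator.transpose_mul_self {X : Matrix (Fin n) (Fin k) ℝ} (h : IsIndicator X) :
    Xᵀ * X = 1 :=
  h.choose_spec.transpose_mul_self

lemma kmeansCost_le_frob {X : Matrix (Fin n) (Fin k) ℝ} (hX : Xᵀ * X = 1)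
    (M : Matrix (Fin n) (Fin m) ℝ) : kmeansCost M X ≤ frob M := by
  have hgram : (M - X * Xᵀ * M)ᵀ * (M - X * Xᵀ * M) = Mᵀ * M - (Xᵀ * M)ᵀ * (Xᵀ * M) := by
    simp only [transpose_sub, transpose_mul, transpose_transpose, Matrix.sub_mul,
      Matrix.mul_sub, Matrix.mul_assoc]
    rw [← Matrix.mul_assoc Xᵀ X, hX, Matrix.one_mul]
    abel
  rw [kmeansCost, frob_eq_sqrt_trace_transpose_mul, frob_eq_sqrt_trace_transpose_mul, hgram,
    trace_sub]
  refine Real.sqrt_le_sqrt (sub_le_self _ ?_)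
  simpa using (posSemidef_conjTranspose_mul_self (Xᵀ * M)).trace_nonneg

lemma kmeansCost_mul_right (M : Matrix (Fin n) (Fin m) ℝ) (B : Matrix (Fin m) (Fin p) ℝ)
    (X : Matrix (Fin n) (Fin k) ℝ) : kmeansCost (M * B) X = frob ((M - X * Xᵀ * M) * B) := by
  rw [kmeansCost, Matrix.sub_mul, Matrix.mul_assoc (X * Xᵀ)]

end KMeans

section SingularValues

variable {n k d : ℕ} {B : Matrix (Fin k) (Fin d) ℝ}

lemma mul_frob_le_frob_mul (hB : (B * Bᵀ).IsHermitian) {c : ℝ}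
    (hc : ∀ i, c ≤ √(hB.eigenvalues i)) (A : Matrix (Fin n) (Fin k) ℝ) :
    c * frob A ≤ frob (A * B) := by
  rcases le_or_gt c 0 with hc0 | hc0
  · exact (mul_nonpos_of_nonpos_of_nonneg hc0 (frob_nonneg A)).trans (frob_nonneg _)
  rw [frob_mul_eq_sqrt_trace, frob_eq_sqrt_trace_mul_transpose, ← Real.sqrt_sq hc0.le,
    ← Real.sqrt_mul (sq_nonneg c)]
  exact Real.sqrt_le_sqrt
    (hB.mul_trace_le_trace_mul_mul (fun i => (Real.le_sqrt' hc0).mp (hc i)) A)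

lemma frob_mul_le_mul_frob (hB : (B * Bᵀ).IsHermitian) {c : ℝ} (hc0 : 0 ≤ c)
    (hc : ∀ i, √(hB.eigenvalues i) ≤ c) (A : Matrix (Fin n) (Fin k) ℝ) :
    frob (A * B) ≤ c * frob A := by
  rw [frob_mul_eq_sqrt_trace, frob_eq_sqrt_trace_mul_transpose, ← Real.sqrt_sq hc0,
    ← Real.sqrt_mul (sq_nonneg c)]
  exact Real.sqrt_le_sqrt
    (hB.trace_mul_mul_le_mul_trace (fun i => (Real.sqrt_le_iff.mp (hc i)).2) A)

end SingularValues

theorem statement3_general {n k d : ℕ} (t : ℝ) (ht : 0 ≤ t)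
    (U : Matrix (Fin n) (Fin n) ℝ) (hU : Uᵀ * U = 1)
    (R : Matrix (Fin n) (Fin d) ℝ)
    (Φ : Matrix (Fin n) (Fin k) ℝ) (hΦ : Φ = U * rectId n k)
    (Ψ : Matrix (Fin n) (Fin d) ℝ) (hΨ : Ψ = Φ * Φᵀ * R)
    (hH : (Φᵀ * R * (Φᵀ * R)ᵀ).IsHermitian)
    (hsing : ∀ i : Fin k,
      |Real.sqrt (hH.eigenvalues i) - 1| ≤ (Real.sqrt k + t) / Real.sqrt d)
    (XΦ XΨ : Matrix (Fin n) (Fin k) ℝ)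
    (hXΦ : IsOptAssign Φ XΦ) (hXΨ : IsOptAssign Ψ XΨ) :
    kmeansCost Φ XΦ ≤ kmeansCost Φ XΨ ∧
      kmeansCost Φ XΨ ≤ kmeansCost Φ XΦ +
        2 * Real.sqrt ((k : ℝ) / d) * (Real.sqrt k + t) := by
  refine ⟨hXΦ.2 XΨ hXΨ.1, ?_⟩
  set ε := (√k + t) / √d
  have hε : 0 ≤ ε := by positivity
  have hΦ_le : frob Φ ≤ √k := by
    rw [hΦ, frob_mul_of_transpose_mul_self_eq_one hU]
    exact frob_rectId_le n k
  have hCΦ := (kmeansCost_le_frob hXΦ.1.transpose_mul_self Φ).trans hΦ_le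
  have hCΨ := (kmeansCost_le_frob hXΨ.1.transpose_mul_self Φ).trans hΦ_le
  have hΨ_cost (X : Matrix (Fin n) (Fin k) ℝ) :
      kmeansCost Ψ X = frob ((Φ - X * Xᵀ * Φ) * (Φᵀ * R)) := by
    rw [hΨ, Matrix.mul_assoc, kmeansCost_mul_right]
  have hchain : (1 - ε) * kmeansCost Φ XΨ ≤ (1 + ε) * kmeansCost Φ XΦ :=
    calc (1 - ε) * kmeansCost Φ XΨ ≤ kmeansCost Ψ XΨ := by
          rw [hΨ_cost]
          exact mul_frob_le_frob_mul hH (fun i => by linarith [abs_le.mp (hsing i)]) _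
      _ ≤ kmeansCost Ψ XΦ := hXΨ.2 XΦ hXΦ.1
      _ ≤ (1 + ε) * kmeansCost Φ XΦ := by
          rw [hΨ_cost]
          exact frob_mul_le_mul_frob hH (by linarith)
            (fun i => by linarith [abs_le.mp (hsing i)]) _
  have hbound : 2 * √((k : ℝ) / d) * (√k + t) = 2 * ε * √k := by
    rw [Real.sqrt_div' _ (Nat.cast_nonneg d)]
    ring
  rw [hbound]
  linarith [mul_le_mul_of_nonneg_left hCΦ hε, mul_le_mul_of_nonneg_left hCΨ hε]

/-- if every singular value of `R' = Φᵀ R` is within `(√k + t)/√d` of `1`,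
then `C_Φ ≤ C_Ψ ≤ C_Φ + 2√(k/d)(√k + t)`. -/
theorem statement3 {n k d : ℕ} (hnk : k ≤ n) (hkd : k ≤ d) (t : ℝ) (ht : 0 ≤ t)
    (U : Matrix (Fin n) (Fin n) ℝ) (hU : Uᵀ * U = 1)
    (R : Matrix (Fin n) (Fin d) ℝ)
    (Φ : Matrix (Fin n) (Fin k) ℝ) (hΦ : Φ = U * rectId n k)
    (Ψ : Matrix (Fin n) (Fin d) ℝ) (hΨ : Ψ = Φ * Φᵀ * R)
    (hH : (Φᵀ * R * (Φᵀ * R)ᵀ).IsHermitian)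
    (hsing : ∀ i : Fin k,
      |Real.sqrt (hH.eigenvalues i) - 1| ≤ (Real.sqrt k + t) / Real.sqrt d)
    (XΦ XΨ : Matrix (Fin n) (Fin k) ℝ)
    (hXΦ : IsOptAssign Φ XΦ) (hXΨ : IsOptAssign Ψ XΨ) :
    kmeansCost Φ XΦ ≤ kmeansCost Φ XΨ ∧
      kmeansCost Φ XΨ ≤ kmeansCost Φ XΦ +
        2 * Real.sqrt ((k : ℝ) / d) * (Real.sqrt k + t) :=
  statement3_general t ht U hU R Φ hΦ Ψ hΨ hH hsing XΦ XΨ hXΦ hXΨ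
end
end
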